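/- The half-braiding morphisms e_{a, F_A(v)} : a ⊗ F_A(v) → F_A(v) ⊗ a (defined as the mate of (η_v ⊗ j_a) ≫ (−⊗_A−)) are natural in V-morphisms: for every f : u → v in V, the square a ⊗ F_A(u) → a ⊗ F_A(v) → F_A(v) ⊗ a equals a ⊗ F_A(u) → F_A(u) ⊗ a → F_A(v) ⊗ a, i.e., one may slide F_A(f) under the half-braiding. Consequently F_A lifts to a functor F_A^Z : V → Z(A^V) into the Drinfeld center. -/

import Mathlib

open CategoryTheory MonoidalCategory

universe w w' v u

variable (V : Type u) [Category.{v} V] [MonoidalCategory V] [BraidedCategory V]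

/-- A (strict) monoidal structure on a `V`-enriched category: the data and axioms of a
`V`-monoidal category over the braided monoidal category `V`. -/
structure VMonStruct (C : Type w) [EnrichedCategory V C] where
  tUnit : C
  tObj : C → C → C
  tHom : ∀ a b c d : C, ((a ⟶[V] c) ⊗ (b ⟶[V] d)) ⟶ ((tObj a b) ⟶[V] (tObj c d))
  unit_tensor : ∀ a, tObj tUnit a = a
  tensor_unit : ∀ a, tObj a tUnit = a
  tensor_assoc : ∀ a b c, tObj (tObj a b) c = tObj a (tObj b c)
  left_unitality : ∀ a b : C,
    (λ_ (a ⟶[V] b)).inv ≫ (eId V tUnit ⊗ₘ 𝟙 (a ⟶[V] b)) ≫ tHom tUnit a tUnit b =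
      eqToHom (by rw [unit_tensor, unit_tensor])
  right_unitality : ∀ a b : C,
    (ρ_ (a ⟶[V] b)).inv ≫ (𝟙 (a ⟶[V] b) ⊗ₘ eId V tUnit) ≫ tHom a tUnit b tUnit =
      eqToHom (by rw [tensor_unit, tensor_unit])
  tHom_assoc : ∀ a b c d e f : C,
    (tHom a b d e ⊗ₘ 𝟙 (c ⟶[V] f)) ≫ tHom (tObj a b) c (tObj d e) f =
      (α_ (a ⟶[V] d) (b ⟶[V] e) (c ⟶[V] f)).hom ≫
        ((a ⟶[V] d) ◁ tHom b c e f) ≫ tHom a (tObj b c) d (tObj e f) ≫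
        eqToHom (by rw [tensor_assoc a b c, tensor_assoc d e f])
  braided_interchange : ∀ a b c d e f : C,
    (tHom a d b e ⊗ₘ tHom b e c f) ≫ eComp V (tObj a d) (tObj b e) (tObj c f) =
      (α_ (a ⟶[V] b) (d ⟶[V] e) ((b ⟶[V] c) ⊗ (e ⟶[V] f))).hom ≫
        ((a ⟶[V] b) ◁ (α_ (d ⟶[V] e) (b ⟶[V] c) (e ⟶[V] f)).inv) ≫
        ((a ⟶[V] b) ◁ ((β_ (d ⟶[V] e) (b ⟶[V] c)).hom ▷ (e ⟶[V] f))) ≫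
        ((a ⟶[V] b) ◁ (α_ (b ⟶[V] c) (d ⟶[V] e) (e ⟶[V] f)).hom) ≫
        (α_ (a ⟶[V] b) (b ⟶[V] c) ((d ⟶[V] e) ⊗ (e ⟶[V] f))).inv ≫
        (eComp V a b c ⊗ₘ eComp V d e f) ≫ tHom a d c f

variable {V}

section Underlying

variable {C : Type w} [EnrichedCategory V C]

/-- Composition of `𝟙_V`-graded morphisms in the underlying category. -/
def compU {a b c : C} (f : 𝟙_ V ⟶ (a ⟶[V] b)) (g : 𝟙_ V ⟶ (b ⟶[V] c)) :
    𝟙_ V ⟶ (a ⟶[V] c) :=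
  (λ_ (𝟙_ V)).inv ≫ (f ⊗ₘ g) ≫ eComp V a b c

/-- Identity `𝟙_V`-graded morphism. -/
def idU (a : C) : 𝟙_ V ⟶ (a ⟶[V] a) := eId V a

/-- The `𝟙_V`-graded morphism induced by an equality of objects. -/
def eqU {a b : C} (h : a = b) : 𝟙_ V ⟶ (a ⟶[V] b) := by
  subst h; exact idU a

/-- Tensor product of `𝟙_V`-graded morphisms in the underlying category. -/
def tU (M : VMonStruct V C) {a b c d : C}
    (f : 𝟙_ V ⟶ (a ⟶[V] c)) (g : 𝟙_ V ⟶ (b ⟶[V] d)) :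
    𝟙_ V ⟶ (M.tObj a b ⟶[V] M.tObj c d) :=
  (λ_ (𝟙_ V)).inv ≫ (f ⊗ₘ g) ≫ M.tHom a b c d

/-- The free module functor data: a left adjoint `F` of `x ↦ C(1_C → x)` together with the
main adjunction `C^V(a ⊗ F(v) → b) ≅ V(v → C(a → b))`. -/
structure FreeModule (M : VMonStruct V C) where
  F : V → C
  Fmap : ∀ {u v : V}, (u ⟶ v) → (𝟙_ V ⟶ (F u ⟶[V] F v))
  Fmap_id : ∀ v : V, Fmap (𝟙 v) = idU (F v)
  Fmap_comp : ∀ {u v w : V} (f : u ⟶ v) (g : v ⟶ w), Fmap (f ≫ g) = compU (Fmap f) (Fmap g)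
  adj : ∀ (v : V) (a b : C), (𝟙_ V ⟶ (M.tObj a (F v) ⟶[V] b)) ≃ (v ⟶ (a ⟶[V] b))
  adj_nat_right : ∀ (v : V) (a b b' : C) (x : 𝟙_ V ⟶ (M.tObj a (F v) ⟶[V] b))
      (g : 𝟙_ V ⟶ (b ⟶[V] b')),
    adj v a b' (compU x g) =
      adj v a b x ≫ (ρ_ (a ⟶[V] b)).inv ≫ ((a ⟶[V] b) ◁ g) ≫ eComp V a b b'
  adj_nat_left : ∀ {u v : V} (h : u ⟶ v) (a b : C)
      (x : 𝟙_ V ⟶ (M.tObj a (F v) ⟶[V] b)),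
    adj u a b (compU (tU M (idU a) (Fmap h)) x) = h ≫ adj v a b x

/-- The unit of the main adjunction. -/
def unitU {M : VMonStruct V C} (FM : FreeModule M) (v : V) :
    v ⟶ (M.tUnit ⟶[V] FM.F v) :=
  FM.adj v M.tUnit (FM.F v) (eqU (M.unit_tensor (FM.F v)))

/-- The counit of the main adjunction. -/
def counitU {M : VMonStruct V C} (FM : FreeModule M) (a b : C) :
    𝟙_ V ⟶ (M.tObj a (FM.F (a ⟶[V] b)) ⟶[V] b) :=
  (FM.adj (a ⟶[V] b) a b).symm (𝟙 (a ⟶[V] b))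

/-- The half-braiding `e_{a, F(v)}`, the mate of `(η_v ⊗ j_a) ≫ (−⊗−)`. -/
def hb {M : VMonStruct V C} (FM : FreeModule M) (a : C) (v : V) :
    𝟙_ V ⟶ (M.tObj a (FM.F v) ⟶[V] M.tObj (FM.F v) a) :=
  (FM.adj v a (M.tObj (FM.F v) a)).symm
    ((ρ_ v).inv ≫ (unitU FM v ⊗ₘ eId V a) ≫ M.tHom M.tUnit a (FM.F v) a ≫
      eqToHom (by rw [M.unit_tensor]))

end Underlying

/-!
Transport both sides along the adjunction `FM.adj u a _`. The left side becomes
`f ≫ (η_v ⊗ j_a) ≫ (−⊗−)` and the right side `(η_u ⊗ j_a) ≫ (−⊗−)` followed by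
postcomposition with `F(f) ⊗ 1_a`. Naturality of the unit rewrites `f ≫ η_v` as `η_u`
followed by postcomposition with `F(f)`, and the interchange law of the `V`-monoidal structure
moves this postcomposition through the tensor product with `j_a`.
-/

section Monoidal

variable {V : Type*} [Category V] [MonoidalCategory V] {C : Type*} [EnrichedCategory V C]

def postU {p q r : C} (m : 𝟙_ V ⟶ (q ⟶[V] r)) : (p ⟶[V] q) ⟶ (p ⟶[V] r) :=
  (ρ_ _).inv ≫ (_ ◁ m) ≫ eComp V p q r

lemma compU_idU {a b : C} (x : 𝟙_ V ⟶ (a ⟶[V] b)) : compU x (idU b) = x := by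
  simp [compU, idU, MonoidalCategory.tensorHom_def, ← unitors_equal]

lemma idU_compU {a b : C} (x : 𝟙_ V ⟶ (a ⟶[V] b)) : compU (idU a) x = x := by
  simp [compU, idU, tensorHom_def']

lemma compU_eqU {a b c : C} (x : 𝟙_ V ⟶ (a ⟶[V] b)) (h : b = c) :
    compU x (eqU h) = x ≫ eqToHom (congrArg (a ⟶[V] ·) h) := by
  subst h
  rw [eqToHom_refl, Category.comp_id]
  exact compU_idU x

lemma eqU_compU {a b c : C} (h : a = b) (x : 𝟙_ V ⟶ (b ⟶[V] c)) :
    compU (eqU h) x = x ≫ eqToHom (congrArg (· ⟶[V] c) h.symm) := by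
  subst h
  rw [eqToHom_refl, Category.comp_id]
  exact idU_compU x

lemma eqToHom_comp_postU {a a' b c : C} (h : a = a') (m : 𝟙_ V ⟶ (b ⟶[V] c)) :
    eqToHom (congrArg (· ⟶[V] b) h) ≫ postU m =
      postU m ≫ eqToHom (congrArg (· ⟶[V] c) h) := by
  subst h
  simp

end Monoidal

lemma rightUnitor_inv_whiskerLeft_tensorμ (X : V) :
    (ρ_ (X ⊗ 𝟙_ V)).inv ≫ ((X ⊗ 𝟙_ V) ◁ (λ_ (𝟙_ V)).inv) ≫ tensorμ X (𝟙_ V) (𝟙_ V) (𝟙_ V) =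
      (ρ_ X).inv ⊗ₘ (λ_ (𝟙_ V)).inv := by
  rw [Iso.inv_comp_eq, tensor_right_unitality_assoc, ← unitors_equal, tensorHom_comp_tensorHom,
    Iso.hom_inv_id, Iso.hom_inv_id, tensorHom_id, id_whiskerRight, Category.comp_id]

section Braided

variable {C : Type*} [EnrichedCategory V C]

lemma VMonStruct.braided_interchange_tensorμ (M : VMonStruct V C) (a b c d e f : C) :
    (M.tHom a d b e ⊗ₘ M.tHom b e c f) ≫ eComp V (M.tObj a d) (M.tObj b e) (M.tObj c f) =
      tensorμ _ _ _ _ ≫ (eComp V a b c ⊗ₘ eComp V d e f) ≫ M.tHom a d c f := by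
  rw [M.braided_interchange]
  simp only [tensorμ, Category.assoc]

lemma tU_idU_tUnit (M : VMonStruct V C) {b c : C} (x : 𝟙_ V ⟶ (b ⟶[V] c)) :
    tU M (idU M.tUnit) x =
      x ≫ eqToHom (congrArg₂ (· ⟶[V] ·) (M.unit_tensor b).symm (M.unit_tensor c).symm) := by
  have slide : (λ_ (𝟙_ V)).inv ≫ (eId V M.tUnit ⊗ₘ x) =
      x ≫ (λ_ (b ⟶[V] c)).inv ≫ (eId V M.tUnit ⊗ₘ 𝟙 (b ⟶[V] c)) := by
    simp [tensorHom_def']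
  rw [tU, idU, reassoc_of% slide, M.left_unitality]

/- Functoriality of the tensor product in its first variable. The braiding in the interchange
law only swaps the global elements `j` and `m`, on which it acts trivially. -/
lemma tHom_comp_postU (M : VMonStruct V C) {X : V} {p q r a b : C} (x : X ⟶ (p ⟶[V] q))
    (m : 𝟙_ V ⟶ (q ⟶[V] r)) (j : 𝟙_ V ⟶ (a ⟶[V] b)) :
    (x ⊗ₘ j) ≫ M.tHom p a q b ≫ postU (tU M m (idU b)) =
      ((x ≫ postU m) ⊗ₘ j) ≫ M.tHom p a r b := by
  calc (x ⊗ₘ j) ≫ M.tHom p a q b ≫ postU (tU M m (idU b))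
      = (ρ_ _).inv ≫ ((X ⊗ 𝟙_ V) ◁ (λ_ (𝟙_ V)).inv) ≫ ((x ⊗ₘ j) ⊗ₘ (m ⊗ₘ idU b)) ≫
          (M.tHom p a q b ⊗ₘ M.tHom q b r b) ≫ eComp V _ _ _ := by
        simp only [postU, tU, MonoidalCategory.tensorHom_def, Category.assoc,
          MonoidalCategory.whiskerLeft_comp, comp_whiskerRight, whisker_exchange_assoc]
        monoidal
    _ = ((ρ_ X).inv ⊗ₘ (λ_ (𝟙_ V)).inv) ≫ ((x ⊗ₘ m) ⊗ₘ (j ⊗ₘ idU b)) ≫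
          (eComp V p q r ⊗ₘ eComp V a b b) ≫ M.tHom p a r b := by
        rw [M.braided_interchange_tensorμ, tensorμ_natural_assoc,
          reassoc_of% rightUnitor_inv_whiskerLeft_tensorμ]
    _ = ((x ≫ postU m) ⊗ₘ compU j (idU b)) ≫ M.tHom p a r b := by
        rw [tensorHom_comp_tensorHom_assoc, tensorHom_comp_tensorHom_assoc, postU, compU,
          MonoidalCategory.tensorHom_def x m, ← rightUnitor_inv_naturality_assoc]
        simp only [Category.assoc]
    _ = ((x ≫ postU m) ⊗ₘ j) ≫ M.tHom p a r b := by rw [compU_idU]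

variable {M : VMonStruct V C}

lemma FreeModule.adj_compU (FM : FreeModule M) (v : V) {a b b' : C}
    (x : 𝟙_ V ⟶ (M.tObj a (FM.F v) ⟶[V] b)) (g : 𝟙_ V ⟶ (b ⟶[V] b')) :
    FM.adj v a b' (compU x g) = FM.adj v a b x ≫ postU g :=
  FM.adj_nat_right v a b b' x g

lemma unitU_naturality (FM : FreeModule M) {u v : V} (f : u ⟶ v) :
    f ≫ unitU FM v = unitU FM u ≫ postU (FM.Fmap f) := by
  rw [unitU, unitU, ← FM.adj_nat_left f, ← FM.adj_compU]
  congr 1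
  rw [compU_eqU, tU_idU_tUnit, eqU_compU, Category.assoc, eqToHom_trans]

end Braided

/-- The half-braiding morphisms `e_{a, F(v)} : a ⊗ F(v) ⟶ F(v) ⊗ a` (defined
as the mate of `(η_v ⊗ j_a) ≫ (−⊗_A−)`, here `hb`) are natural in `V`-morphisms: for every
`f : u ⟶ v` in `V` one may slide `F(f)` under the half-braiding, i.e.
`(1_a ⊗ F(f)) ≫ e_{a,F(v)} = e_{a,F(u)} ≫ (F(f) ⊗ 1_a)` in the underlying category.
(Consequently `F` lifts to a functor into the Drinfeld center `Z(A^V)`.) -/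
theorem half_braiding_natural
    {V : Type*} [Category V] [MonoidalCategory V] [BraidedCategory V]
    {C : Type*} [EnrichedCategory V C] (M : VMonStruct V C) (FM : FreeModule M)
    {u v : V} (f : u ⟶ v) (a : C) :
    compU (tU M (idU a) (FM.Fmap f)) (hb FM a v) =
      compU (hb FM a u) (tU M (FM.Fmap f) (idU a)) := by
  apply (FM.adj u a (M.tObj (FM.F v) a)).injective
  rw [FM.adj_nat_left, FM.adj_compU, hb, hb, Equiv.apply_symm_apply, Equiv.apply_symm_apply]
  have slide_f : f ≫ (ρ_ v).inv ≫ (unitU FM v ⊗ₘ eId V a) =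
      (ρ_ u).inv ≫ ((unitU FM u ≫ postU (FM.Fmap f)) ⊗ₘ eId V a) := by
    rw [← unitU_naturality]
    simp [MonoidalCategory.tensorHom_def]
  simp only [Category.assoc]
  rw [reassoc_of% slide_f, eqToHom_comp_postU (M.unit_tensor a), reassoc_of% tHom_comp_postU]
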